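/- arXiv:1503.07685 — 3 statements merged into one kernel-verified Lean document; each statement's English description precedes it below -/
import Mathlib

section
/- Let M, P be positive integers, and let v : Fin M → ℝ³ (triangle centers of mass), n : Fin M → ℝ³ (unit normals, ‖n_k‖ = 1), a : Fin M → ℝ with a_k > 0 (triangle areas), together with target data w : Fin P → ℝ³, m : Fin P → ℝ³ with ‖m_j‖ = 1, b : Fin P → ℝ with b_j > 0, and g : Fin P → ℝ. Fix γ_f, γ_W > 0 and define the discrete L² matching energy E : (Fin M → ℝ) → ℝ by E(f) = (γ_f/2) Σ_k a_k f_k² + (γ_W/2) [ Σ_{k,l} a_k a_l k((v_k,n_k,f_k),(v_l,n_l,f_l)) − 2 Σ_{k,j} a_k b_j k((v_k,n_k,f_k),(w_j,m_j,g_j)) + Σ_{j,j'} b_j b_{j'} k((w_j,m_j,g_j),(w_{j'},m_{j'},g_{j'})) ]. Then E attains its infimum: there exists f* : Fin M → ℝ such that E(f*) ≤ E(f) for all f : Fin M → ℝ. -/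
/-!
The energy is continuous, and it is coercive: the penalty `γf/2 Σₖ aₖ fₖ²` tends to `+∞` away
from compact sets, while the varifold part is bounded independently of `f`, because the signal
enters each kernel value only through the factor `exp (-(s - t)² / σf²) ∈ (0, 1]`. A continuous
coercive function on the proper space `Fin M → ℝ` attains its minimum.
-/

open MeasureTheory Filter Topology
open scoped RealInnerProductSpace

noncomputable section

/-- The 3-dimensional Euclidean space in which the fshapes live. -/
abbrev E3 := EuclideanSpace ℝ (Fin 3)

/-- The Gaussian kernel on `ℝ³ × ℝ³ × ℝ` with parameters `σe, σt, σf`, a 2-plane being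
identified with a choice of unit normal vector. -/
def kern (σe σt σf : ℝ) (p q : E3 × E3 × ℝ) : ℝ :=
  Real.exp (-‖p.1 - q.1‖ ^ 2 / σe ^ 2) *
    Real.exp (-(2 * (1 - ⟪p.2.1, q.2.1⟫ ^ 2)) / σt ^ 2) *
    Real.exp (-(p.2.2 - q.2.2) ^ 2 / σf ^ 2)

theorem tendsto_sq_cocompact_atTop : Tendsto (fun x : ℝ => x ^ 2) (cocompact ℝ) atTop := by
  simpa only [Function.comp_def, Real.norm_eq_abs, sq_abs] using
    (tendsto_pow_atTop two_ne_zero).comp (tendsto_norm_cocompact_atTop (E := ℝ))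

theorem tendsto_sum_mul_sq_cocompact_atTop {ι : Type*} [Fintype ι] {a : ι → ℝ}
    (ha : ∀ i, 0 < a i) :
    Tendsto (fun f : ι → ℝ => ∑ i, a i * f i ^ 2) (cocompact (ι → ℝ)) atTop := by
  rw [← coprodᵢ_cocompact, Filter.coprodᵢ, tendsto_iSup]
  intro i
  refine tendsto_atTop_mono (fun f => Finset.single_le_sum
    (fun j _ => mul_nonneg (ha j).le (sq_nonneg (f j))) (Finset.mem_univ i)) ?_
  exact (tendsto_sq_cocompact_atTop.const_mul_atTop (ha i)).comp tendsto_comap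

theorem kern_pos (σe σt σf : ℝ) (p q : E3 × E3 × ℝ) : 0 < kern σe σt σf p q := by
  unfold kern; positivity

theorem kern_le_kern_zero_signal (σe σt σf : ℝ) (x y u v : E3) (s t : ℝ) :
    kern σe σt σf (x, u, s) (y, v, t) ≤ kern σe σt σf (x, u, 0) (y, v, 0) := by
  have hsignal : Real.exp (-(s - t) ^ 2 / σf ^ 2) ≤ 1 :=
    Real.exp_le_one_iff.2 <|
      div_nonpos_of_nonpos_of_nonneg (neg_nonpos.2 (sq_nonneg _)) (sq_nonneg σf)
  simp only [kern, sub_self, zero_pow two_ne_zero, neg_zero, zero_div, Real.exp_zero, mul_one]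
  exact mul_le_of_le_one_right (by positivity) hsignal

/-- The dual inner product `⟨μ, ν⟩` of the discrete fvarifolds `μ = Σᵢ aᵢ δ_(xᵢ, uᵢ, sᵢ)` and
`ν = Σⱼ bⱼ δ_(yⱼ, vⱼ, tⱼ)` in the RKHS of `kern`. -/
def fvarifoldInner (σe σt σf : ℝ) {ι κ : Type*} [Fintype ι] [Fintype κ]
    (a : ι → ℝ) (x u : ι → E3) (s : ι → ℝ) (b : κ → ℝ) (y v : κ → E3) (t : κ → ℝ) : ℝ :=
  ∑ i, ∑ j, a i * b j * kern σe σt σf (x i, u i, s i) (y j, v j, t j)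

theorem abs_fvarifoldInner_le {ι κ : Type*} [Fintype ι] [Fintype κ] (σe σt σf : ℝ)
    (a : ι → ℝ) (x u : ι → E3) (s : ι → ℝ) (b : κ → ℝ) (y v : κ → E3) (t : κ → ℝ) :
    |fvarifoldInner σe σt σf a x u s b y v t| ≤ fvarifoldInner σe σt σf |a| x u 0 |b| y v 0 := by
  refine (Finset.abs_sum_le_sum_abs _ _).trans (Finset.sum_le_sum fun i _ => ?_)
  refine (Finset.abs_sum_le_sum_abs _ _).trans (Finset.sum_le_sum fun j _ => ?_)
  rw [abs_mul, abs_mul, abs_of_pos (kern_pos ..), Pi.abs_apply, Pi.abs_apply]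
  exact mul_le_mul_of_nonneg_left (kern_le_kern_zero_signal ..) (by positivity)

theorem discrete_L2_energy_attains_min_general
    (M P : ℕ)
    (v : Fin M → E3) (n : Fin M → E3)
    (a : Fin M → ℝ) (ha : ∀ k, 0 < a k)
    (w : Fin P → E3) (m : Fin P → E3)
    (b : Fin P → ℝ) (g : Fin P → ℝ)
    (σe σt σf γf γW : ℝ)
    (hγf : 0 < γf)
    (E : (Fin M → ℝ) → ℝ)
    (hE : ∀ f : Fin M → ℝ,
      E f = γf / 2 * ∑ k, a k * f k ^ 2
        + γW / 2 *
          ((∑ k, ∑ l, a k * a l * kern σe σt σf (v k, n k, f k) (v l, n l, f l))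
            - 2 * ∑ k, ∑ j, a k * b j * kern σe σt σf (v k, n k, f k) (w j, m j, g j)
            + ∑ j, ∑ j', b j * b j' *
                kern σe σt σf (w j, m j, g j) (w j', m j', g j'))) :
    ∃ fstar : Fin M → ℝ, ∀ f : Fin M → ℝ, E fstar ≤ E f := by
  have hcont : Continuous E := by
    rw [funext hE]; unfold kern; fun_prop
  set B := fvarifoldInner σe σt σf |a| v n 0 |a| v n 0
    + 2 * fvarifoldInner σe σt σf |a| v n 0 |b| w m 0
    + fvarifoldInner σe σt σf |b| w m 0 |b| w m 0
  have hbdd (f : Fin M → ℝ) : -(|γW / 2| * B) ≤ γW / 2 *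
      (fvarifoldInner σe σt σf a v n f a v n f - 2 * fvarifoldInner σe σt σf a v n f b w m g
        + fvarifoldInner σe σt σf b w m g b w m g) := by
    have h₁ := abs_le.1 (abs_fvarifoldInner_le σe σt σf a v n f a v n f)
    have h₂ := abs_le.1 (abs_fvarifoldInner_le σe σt σf a v n f b w m g)
    have h₃ := abs_le.1 (abs_fvarifoldInner_le σe σt σf b w m g b w m g)
    refine (neg_le_neg ?_).trans (neg_abs_le _)
    rw [abs_mul]
    exact mul_le_mul_of_nonneg_left (abs_le.2 ⟨by linarith, by linarith⟩) (abs_nonneg _)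
  have hcoercive : Tendsto E (cocompact (Fin M → ℝ)) atTop := by
    rw [funext hE]
    exact tendsto_atTop_add_right_of_le _ _
      ((tendsto_sum_mul_sq_cocompact_atTop ha).const_mul_atTop (by positivity)) hbdd
  exact hcont.exists_forall_le hcoercive

/-- The discrete `L²` matching energy (`P₀` finite elements, one signal value per
triangle) attains its infimum. -/
theorem discrete_L2_energy_attains_min
    (M P : ℕ) (hM : 0 < M) (hP : 0 < P)
    (v : Fin M → E3) (n : Fin M → E3) (hn : ∀ k, ‖n k‖ = 1)
    (a : Fin M → ℝ) (ha : ∀ k, 0 < a k)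
    (w : Fin P → E3) (m : Fin P → E3) (hm : ∀ j, ‖m j‖ = 1)
    (b : Fin P → ℝ) (hb : ∀ j, 0 < b j) (g : Fin P → ℝ)
    (σe σt σf γf γW : ℝ) (hσe : 0 < σe) (hσt : 0 < σt) (hσf : 0 < σf)
    (hγf : 0 < γf) (hγW : 0 < γW)
    (E : (Fin M → ℝ) → ℝ)
    (hE : ∀ f : Fin M → ℝ,
      E f = γf / 2 * ∑ k, a k * f k ^ 2
        + γW / 2 *
          ((∑ k, ∑ l, a k * a l * kern σe σt σf (v k, n k, f k) (v l, n l, f l))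
            - 2 * ∑ k, ∑ j, a k * b j * kern σe σt σf (v k, n k, f k) (w j, m j, g j)
            + ∑ j, ∑ j', b j * b j' *
                kern σe σt σf (w j, m j, g j) (w j', m j', g j'))) :
    ∃ fstar : Fin M → ℝ, ∀ f : Fin M → ℝ, E fstar ≤ E f :=
  discrete_L2_energy_attains_min_general M P v n a ha w m b g σe σt σf γf γW hγf E hE
end
end

section
/- Let h > 0, let (T_k)_{k ∈ Fin M} be pairwise disjoint Borel subsets of ℝ³ with H²(T_k) < ∞, let v_k ∈ T_k and n_k ∈ ℝ³ be given with ‖x − v_k‖ ≤ h for every x ∈ T_k, and let f : ℝ³ → ℝ be Borel measurable and λ-Lipschitz on each T_k ∪ {v_k} (i.e. |f(x) − f(y)| ≤ λ‖x−y‖ for x, y ∈ T_k ∪ {v_k}). Let φ : ℝ³ × ℝ³ × ℝ → ℝ satisfy |φ(x,u,s) − φ(y,v,t)| ≤ L(‖x−y‖ + ‖u−v‖ + |s−t|) for some L ≥ 0. Then | Σ_k ∫_{T_k} φ(x, n_k, f(x)) dH²(x) − Σ_k H²(T_k) φ(v_k, n_k, f(v_k)) | ≤ L · h · (1 + λ)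 · Σ_k H²(T_k). -/
/-!
On each piece `T k` the integrand `x ↦ φ (x, n k, f x)` stays within `L * h * (1 + λ)` of the
constant `φ (v k, n k, f (v k))`, since `‖x - v k‖ ≤ h` and `|f x - f (v k)| ≤ λ h`. Integrating
this pointwise bound over `T k` and summing over `k` gives the estimate.
-/

open MeasureTheory

noncomputable section

lemma lipschitzWith_of_abs_sub_le_mul_norm_add
    {α β γ : Type*} [SeminormedAddCommGroup α] [SeminormedAddCommGroup β]
    [SeminormedAddCommGroup γ] {φ : α × β × γ → ℝ} {L : ℝ} (hL : 0 ≤ L)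
    (hφ : ∀ p q : α × β × γ,
      |φ p - φ q| ≤ L * (‖p.1 - q.1‖ + ‖p.2.1 - q.2.1‖ + ‖p.2.2 - q.2.2‖)) :
    LipschitzWith (Real.toNNReal (3 * L)) φ := by
  refine LipschitzWith.of_dist_le' fun p q => ?_
  have h₁ : ‖p.1 - q.1‖ ≤ ‖p - q‖ := norm_fst_le (p - q)
  have h₂ : ‖p.2.1 - q.2.1‖ ≤ ‖p - q‖ := (norm_fst_le (p - q).2).trans (norm_snd_le (p - q))
  have h₃ : ‖p.2.2 - q.2.2‖ ≤ ‖p - q‖ := (norm_snd_le (p - q).2).trans (norm_snd_le (p - q))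
  rw [Real.dist_eq, dist_eq_norm]
  calc |φ p - φ q| ≤ L * (‖p.1 - q.1‖ + ‖p.2.1 - q.2.1‖ + ‖p.2.2 - q.2.2‖) := hφ p q
    _ ≤ L * (‖p - q‖ + ‖p - q‖ + ‖p - q‖) := by gcongr
    _ = 3 * L * ‖p - q‖ := by ring

lemma norm_setIntegral_sub_measureReal_smul_le
    {X E : Type*} [MeasurableSpace X] [NormedAddCommGroup E] [NormedSpace ℝ E] [CompleteSpace E]
    {μ : Measure X} {s : Set X} {g : X → E} {c : E} {C : ℝ}
    (hs : MeasurableSet s) (hμs : μ s < ⊤) (hg : AEStronglyMeasurable g (μ.restrict s))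
    (hgc : ∀ x ∈ s, ‖g x - c‖ ≤ C) :
    ‖∫ x in s, g x ∂μ - μ.real s • c‖ ≤ C * μ.real s := by
  have hg_int : IntegrableOn g s μ := by
    have : IsFiniteMeasure (μ.restrict s) := isFiniteMeasure_restrict.2 hμs.ne
    refine Integrable.of_bound hg (C + ‖c‖) ?_
    refine ae_restrict_of_forall_mem hs fun x hx => ?_
    calc ‖g x‖ = ‖(g x - c) + c‖ := by rw [sub_add_cancel]
      _ ≤ C + ‖c‖ := (norm_add_le _ _).trans (by gcongr; exact hgc x hx)
  rw [← setIntegral_const, ← integral_sub hg_int (integrableOn_const hμs.ne)]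
  exact norm_setIntegral_le_of_norm_le_const hμs hgc

theorem fvarifold_dirac_approx_P1_general
    (h : ℝ) (M : ℕ)
    (T : Fin M → Set E3) (hT : ∀ k, MeasurableSet (T k))
    (hTfin : ∀ k, μH[2] (T k) < ⊤)
    (v n : Fin M → E3)
    (hclose : ∀ k, ∀ x ∈ T k, ‖x - v k‖ ≤ h)
    (f : E3 → ℝ) (hfmeas : Measurable f) (lam : ℝ) (hlam : 0 ≤ lam)
    (hflip : ∀ k, ∀ x ∈ T k ∪ {v k}, ∀ y ∈ T k ∪ {v k}, |f x - f y| ≤ lam * ‖x - y‖)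
    (φ : E3 × E3 × ℝ → ℝ) (L : ℝ) (hL : 0 ≤ L)
    (hlip : ∀ p q : E3 × E3 × ℝ,
      |φ p - φ q| ≤ L * (‖p.1 - q.1‖ + ‖p.2.1 - q.2.1‖ + |p.2.2 - q.2.2|)) :
    |(∑ k, ∫ x in T k, φ (x, n k, f x) ∂μH[2])
        - ∑ k, (μH[2] (T k)).toReal * φ (v k, n k, f (v k))|
      ≤ L * h * (1 + lam) * ∑ k, (μH[2] (T k)).toReal := by
  have hφ : Continuous φ := (lipschitzWith_of_abs_sub_le_mul_norm_add hL
    (by simpa only [Real.norm_eq_abs] using hlip)).continuous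
  have hpointwise : ∀ k, ∀ x ∈ T k,
      ‖φ (x, n k, f x) - φ (v k, n k, f (v k))‖ ≤ L * h * (1 + lam) := by
    intro k x hx
    have hfx : |f x - f (v k)| ≤ lam * h :=
      (hflip k x (Or.inl hx) (v k) (Or.inr rfl)).trans (by gcongr; exact hclose k x hx)
    calc ‖φ (x, n k, f x) - φ (v k, n k, f (v k))‖
        ≤ L * (‖x - v k‖ + ‖n k - n k‖ + |f x - f (v k)|) := hlip _ _
      _ = L * (‖x - v k‖ + |f x - f (v k)|) := by rw [sub_self, norm_zero, add_zero]
      _ ≤ L * (h + lam * h) := by gcongr; exact hclose k x hx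
      _ = L * h * (1 + lam) := by ring
  have hpiece : ∀ k, |(∫ x in T k, φ (x, n k, f x) ∂μH[2])
      - (μH[2] (T k)).toReal * φ (v k, n k, f (v k))|
        ≤ L * h * (1 + lam) * (μH[2] (T k)).toReal := fun k =>
    norm_setIntegral_sub_measureReal_smul_le (hT k) (hTfin k)
      (hφ.measurable.comp (by fun_prop)).aestronglyMeasurable (hpointwise k)
  calc _ = |∑ k, ((∫ x in T k, φ (x, n k, f x) ∂μH[2])
          - (μH[2] (T k)).toReal * φ (v k, n k, f (v k)))| := by rw [Finset.sum_sub_distrib]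
    _ ≤ ∑ k, L * h * (1 + lam) * (μH[2] (T k)).toReal :=
        (Finset.abs_sum_le_sum_abs _ _).trans (Finset.sum_le_sum fun k _ => hpiece k)
    _ = L * h * (1 + lam) * ∑ k, (μH[2] (T k)).toReal := by rw [Finset.mul_sum]

/-- For a `P₁` signal `f` which is `λ`-Lipschitz on each piece `T k ∪ {v k}` with
piecewise constant normals `n k`, the dual pairing difference between the fvarifold of
a triangulation decomposed into pieces `T k` of diameter `≤ h` and the discrete
fvarifold `Σ_k H²(T k) δ_{(v k, n k, f (v k))}` is bounded by
`L·h·(1 + λ)·Σ_k H²(T k)` for any `L`-Lipschitz test function `φ`. -/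
theorem fvarifold_dirac_approx_P1
    (h : ℝ) (hh : 0 < h) (M : ℕ)
    (T : Fin M → Set E3) (hT : ∀ k, MeasurableSet (T k))
    (hTfin : ∀ k, μH[2] (T k) < ⊤)
    (hdisj : Pairwise fun k l => Disjoint (T k) (T l))
    (v n : Fin M → E3) (hv : ∀ k, v k ∈ T k)
    (hclose : ∀ k, ∀ x ∈ T k, ‖x - v k‖ ≤ h)
    (f : E3 → ℝ) (hfmeas : Measurable f) (lam : ℝ) (hlam : 0 ≤ lam)
    (hflip : ∀ k, ∀ x ∈ T k ∪ {v k}, ∀ y ∈ T k ∪ {v k}, |f x - f y| ≤ lam * ‖x - y‖)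
    (φ : E3 × E3 × ℝ → ℝ) (L : ℝ) (hL : 0 ≤ L)
    (hlip : ∀ p q : E3 × E3 × ℝ,
      |φ p - φ q| ≤ L * (‖p.1 - q.1‖ + ‖p.2.1 - q.2.1‖ + |p.2.2 - q.2.2|)) :
    |(∑ k, ∫ x in T k, φ (x, n k, f x) ∂μH[2])
        - ∑ k, (μH[2] (T k)).toReal * φ (v k, n k, f (v k))|
      ≤ L * h * (1 + lam) * ∑ k, (μH[2] (T k)).toReal :=
  fvarifold_dirac_approx_P1_general h M T hT hTfin v n hclose f hfmeas lam hlam hflip φ L hL hlip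
end
end

section
/- Let X, Y ⊆ ℝ³ be bounded Borel sets with H²(X) < ∞ and H²(Y) < ∞, let n_X, n_Y : ℝ³ → ℝ³ be Borel measurable unit normal fields on X and Y respectively, let g : ℝ³ → ℝ be Borel measurable with ∫_Y g² dH² < ∞, and let γ_f, γ_W > 0. Define E(f) = (γ_f/2)∫_X f² dH² + (γ_W/2)[ ∫_X∫_X k((x,n_X(x),f(x)),(y,n_X(y),f(y))) dH²dH² − 2∫_X∫_Y k((x,n_X(x),f(x)),(y,n_Y(y),g(y))) dH²dH² + ∫_Y∫_Y k((x,n_Y(x),g(x)),(y,n_Y(y),g(y))) dH²dH² ] for Borel measurable f with ∫_X f² dH² < ∞. Then there exists a constant C > 0 depending only on the kernel parameters σ_e, σ_t, σ_f (in particular independent of X and Y) such that every minimizer f* of E over the square-integrable signals is essentially bounded and satisfies the essential supremum bound ‖f*‖_{L∞(X)} ≤ C (γ_W/γ_f) (H²(X) + H²(Y)). -/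
open MeasureTheory
open scoped RealInnerProductSpace

noncomputable section

/-- The `L²` matching energy
`E(f) = (γf/2)‖f‖²_{L²(X)} + (γW/2)‖μ_{(X,f)} − μ_{(Y,g)}‖²_{W'}`,
the squared varifold distance being computed by integrating the kernel. -/
def energyL2 (σe σt σf γf γW : ℝ) (X Y : Set E3) (nX nY : E3 → E3) (g f : E3 → ℝ) :
    ℝ :=
  γf / 2 * ∫ x in X, (f x) ^ 2 ∂μH[2]
    + γW / 2 *
      ((∫ x in X, ∫ y in X, kern σe σt σf (x, nX x, f x) (y, nX y, f y) ∂μH[2] ∂μH[2])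
        - 2 * ∫ x in X, ∫ y in Y,
            kern σe σt σf (x, nX x, f x) (y, nY y, g y) ∂μH[2] ∂μH[2]
        + ∫ x in Y, ∫ y in Y,
            kern σe σt σf (x, nY x, g x) (y, nY y, g y) ∂μH[2] ∂μH[2])

/-!
Truncating `f*` at a level `M` lowers the `L²` term by at least `γf M ∫_X (|f*| - M)⁺`.
Since the kernel is bounded by `1` and `2/σf`-Lipschitz in each signal variable, the same
truncation raises the varifold term by at most `2 γW (H²(X) + H²(Y)) / σf · ∫_X (|f*| - M)⁺`.
For `M = 4 γW (H²(X) + H²(Y)) / (σf γf)` the energy therefore strictly drops unless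
`(|f*| - M)⁺ = 0` almost everywhere, which minimality forces.
-/

open Real

lemma lipschitzWith_two_exp_neg_sq : LipschitzWith 2 fun x : ℝ => exp (-x ^ 2) := by
  have hderiv (x : ℝ) : HasDerivAt (fun x : ℝ => exp (-x ^ 2)) (-2 * mulExpNegMulSq 1 x) x := by
    convert ((hasDerivAt_pow 2 x).neg).exp using 1
    · rfl
    · rw [mulExpNegSq_apply, Pi.neg_apply]
      ring_nf
  refine lipschitzWith_of_nnnorm_deriv_le (fun x => (hderiv x).differentiableAt) fun x => ?_
  rw [(hderiv x).deriv, ← NNReal.coe_le_coe, coe_nnnorm, norm_mul]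
  simpa using abs_mulExpNegMulSq_one_le_one x

lemma exp_neg_sq_div_le_one (a b : ℝ) : exp (-a ^ 2 / b ^ 2) ≤ 1 := by
  rw [exp_le_one_iff]; exact div_nonpos_of_nonpos_of_nonneg (by nlinarith) (sq_nonneg b)

lemma exp_neg_two_mul_one_sub_inner_sq_div_le_one {F : Type*} [NormedAddCommGroup F]
    [InnerProductSpace ℝ F] {u v : F} (hu : ‖u‖ ≤ 1) (hv : ‖v‖ ≤ 1) (σt : ℝ) :
    exp (-(2 * (1 - ⟪u, v⟫ ^ 2)) / σt ^ 2) ≤ 1 := by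
  have : |⟪u, v⟫| ≤ 1 := (abs_real_inner_le_norm u v).trans (mul_le_one₀ hu (norm_nonneg v) hv)
  rw [exp_le_one_iff]
  refine div_nonpos_of_nonpos_of_nonneg ?_ (sq_nonneg σt)
  nlinarith [sq_abs ⟪u, v⟫, abs_nonneg ⟪u, v⟫]

lemma kern_nonneg (σe σt σf : ℝ) (p q : E3 × E3 × ℝ) : 0 ≤ kern σe σt σf p q := by
  unfold kern; positivity

lemma continuous_kern (σe σt σf : ℝ) :
    Continuous fun z : (E3 × E3 × ℝ) × (E3 × E3 × ℝ) => kern σe σt σf z.1 z.2 := by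
  unfold kern; fun_prop

lemma kern_le_one (σe σt σf : ℝ) (x y : E3) {u v : E3} (hu : ‖u‖ ≤ 1) (hv : ‖v‖ ≤ 1)
    (s t : ℝ) : kern σe σt σf (x, u, s) (y, v, t) ≤ 1 :=
  mul_le_one₀ (mul_le_one₀ (exp_neg_sq_div_le_one _ _) (exp_nonneg _)
    (exp_neg_two_mul_one_sub_inner_sq_div_le_one hu hv σt)) (exp_nonneg _)
    (exp_neg_sq_div_le_one _ _)

lemma abs_kern_sub_le (σe σt σf : ℝ) (hσf : 0 < σf) (x y : E3) {u v : E3}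
    (hu : ‖u‖ ≤ 1) (hv : ‖v‖ ≤ 1) (s t s' t' : ℝ) :
    |kern σe σt σf (x, u, s) (y, v, t) - kern σe σt σf (x, u, s') (y, v, t')| ≤
      2 / σf * (|s - s'| + |t - t'|) := by
  set A := exp (-‖x - y‖ ^ 2 / σe ^ 2) * exp (-(2 * (1 - ⟪u, v⟫ ^ 2)) / σt ^ 2)
  have hA : |A| ≤ 1 := by
    rw [abs_of_nonneg (by positivity)]
    exact mul_le_one₀ (exp_neg_sq_div_le_one _ _) (exp_nonneg _)
      (exp_neg_two_mul_one_sub_inner_sq_div_le_one hu hv σt)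
  have hgauss (r : ℝ) : exp (-r ^ 2 / σf ^ 2) = exp (-(r / σf) ^ 2) := by rw [div_pow, neg_div]
  have hlip := (lipschitzWith_two_exp_neg_sq.dist_le_mul ((s - t) / σf) ((s' - t') / σf))
  simp only [Real.dist_eq, NNReal.coe_ofNat] at hlip
  calc |kern σe σt σf (x, u, s) (y, v, t) - kern σe σt σf (x, u, s') (y, v, t')|
      = |A| * |exp (-((s - t) / σf) ^ 2) - exp (-((s' - t') / σf) ^ 2)| := by
        simp only [kern, A, hgauss, ← abs_mul, mul_sub]
    _ ≤ 1 * (2 * |(s - t) / σf - (s' - t') / σf|) := by gcongr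
    _ = 2 / σf * |(s - s') - (t - t')| := by
        rw [one_mul, ← sub_div, abs_div, abs_of_pos hσf]; ring_nf
    _ ≤ 2 / σf * (|s - s'| + |t - t'|) := by gcongr; exact abs_sub _ _

section Clip

def clip (M a : ℝ) : ℝ := max (-M) (min M a)

variable {M : ℝ}

lemma abs_clip (hM : 0 ≤ M) (a : ℝ) : |clip M a| = min M |a| := by
  unfold clip; cases abs_cases a <;> grind

lemma abs_sub_clip (hM : 0 ≤ M) (a : ℝ) : |a - clip M a| = max (|a| - M) 0 := by
  unfold clip; cases abs_cases a <;> grind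

lemma two_mul_max_abs_sub_le_sq_sub_sq_clip (hM : 0 ≤ M) (a : ℝ) :
    2 * M * max (|a| - M) 0 ≤ a ^ 2 - clip M a ^ 2 := by
  rw [← sq_abs (clip M a), abs_clip hM, ← sq_abs a]
  rcases le_total |a| M with h | h
  · simp [h]
  · rw [max_eq_left (by linarith), min_eq_left h]
    nlinarith

end Clip

section DoubleIntegral

variable {α β : Type*} [MeasurableSpace α] [MeasurableSpace β] {μ : Measure α} {ν : Measure β}
  [IsFiniteMeasure μ] [IsFiniteMeasure ν]

lemma integral_integral_sub_le_of_sub_le {F G : α × β → ℝ} (hF : Integrable F (μ.prod ν))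
    (hG : Integrable G (μ.prod ν)) {u : α → ℝ} {v : β → ℝ} (hu : Integrable u μ)
    (hv : Integrable v ν) (L : ℝ) (hFG : ∀ᵐ z ∂μ.prod ν, F z - G z ≤ L * (u z.1 + v z.2)) :
    ∫ x, ∫ y, F (x, y) ∂ν ∂μ - ∫ x, ∫ y, G (x, y) ∂ν ∂μ ≤
      L * (ν.real Set.univ * ∫ x, u x ∂μ + μ.real Set.univ * ∫ y, v y ∂ν) := by
  have huv : Integrable (fun z : α × β => u z.1 + v z.2) (μ.prod ν) :=
    (hu.comp_fst ν).add (hv.comp_snd μ)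
  rw [← integral_prod F hF, ← integral_prod G hG, ← integral_sub hF hG]
  calc ∫ z, F z - G z ∂μ.prod ν ≤ ∫ z, L * (u z.1 + v z.2) ∂μ.prod ν :=
        integral_mono_ae (hF.sub hG) (huv.const_mul L) hFG
    _ = _ := by
        rw [integral_const_mul, integral_add (hu.comp_fst ν) (hv.comp_snd μ), integral_fun_fst,
          integral_fun_snd, smul_eq_mul, smul_eq_mul]

end DoubleIntegral

section KernelIntegral

variable {μ ν : Measure E3} [IsFiniteMeasure μ] [IsFiniteMeasure ν] {n m : E3 → E3}
  {φ ψ : E3 → ℝ}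

lemma measurable_kern_comp (σe σt σf : ℝ) (hn : Measurable n) (hm : Measurable m)
    (hφ : Measurable φ) (hψ : Measurable ψ) :
    Measurable fun p : E3 × E3 => kern σe σt σf (p.1, n p.1, φ p.1) (p.2, m p.2, ψ p.2) :=
  (continuous_kern σe σt σf).measurable.comp
    (f := fun p : E3 × E3 => ((p.1, n p.1, φ p.1), (p.2, m p.2, ψ p.2))) (by fun_prop)

lemma integrable_kern_comp (σe σt σf : ℝ) (hn : Measurable n) (hm : Measurable m)
    (hφ : Measurable φ) (hψ : Measurable ψ) (hnμ : ∀ᵐ x ∂μ, ‖n x‖ ≤ 1)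
    (hmν : ∀ᵐ y ∂ν, ‖m y‖ ≤ 1) :
    Integrable (fun p : E3 × E3 => kern σe σt σf (p.1, n p.1, φ p.1) (p.2, m p.2, ψ p.2))
      (μ.prod ν) := by
  refine .of_bound (measurable_kern_comp σe σt σf hn hm hφ hψ).aestronglyMeasurable 1 ?_
  filter_upwards [Measure.quasiMeasurePreserving_fst.ae hnμ,
    Measure.quasiMeasurePreserving_snd.ae hmν] with p hp1 hp2
  rw [Real.norm_of_nonneg (kern_nonneg _ _ _ _ _)]
  exact kern_le_one σe σt σf _ _ hp1 hp2 _ _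

lemma integral_integral_kern_sub_le (σe σt σf : ℝ) (hσf : 0 < σf) (hn : Measurable n)
    (hm : Measurable m) (hnμ : ∀ᵐ x ∂μ, ‖n x‖ ≤ 1) (hmν : ∀ᵐ y ∂ν, ‖m y‖ ≤ 1)
    {φ' ψ' : E3 → ℝ} (hφ : Measurable φ) (hψ : Measurable ψ) (hφ' : Measurable φ')
    (hψ' : Measurable ψ') (hφφ' : Integrable (fun x => |φ x - φ' x|) μ)
    (hψψ' : Integrable (fun y => |ψ y - ψ' y|) ν) :
    ∫ x, ∫ y, kern σe σt σf (x, n x, φ x) (y, m y, ψ y) ∂ν ∂μ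
        - ∫ x, ∫ y, kern σe σt σf (x, n x, φ' x) (y, m y, ψ' y) ∂ν ∂μ ≤
      2 / σf * (ν.real Set.univ * ∫ x, |φ x - φ' x| ∂μ
        + μ.real Set.univ * ∫ y, |ψ y - ψ' y| ∂ν) := by
  refine integral_integral_sub_le_of_sub_le
    (integrable_kern_comp σe σt σf hn hm hφ hψ hnμ hmν)
    (integrable_kern_comp σe σt σf hn hm hφ' hψ' hnμ hmν) hφφ' hψψ' _ ?_
  filter_upwards [Measure.quasiMeasurePreserving_fst.ae hnμ,
    Measure.quasiMeasurePreserving_snd.ae hmν] with p hp1 hp2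
  exact (le_abs_self _).trans (abs_kern_sub_le σe σt σf hσf _ _ hp1 hp2 _ _ _ _)

end KernelIntegral

section ClipIntegral

variable {α : Type*} [MeasurableSpace α] {μ : Measure α} {f : α → ℝ} {M : ℝ}

lemma continuous_clip (M : ℝ) : Continuous (clip M) :=
  continuous_const.max (continuous_const.min continuous_id)

lemma MeasureTheory.MemLp.clip (hf : MemLp f 2 μ) (hM : 0 ≤ M) :
    MemLp (fun x => clip M (f x)) 2 μ :=
  hf.of_le ((continuous_clip M).comp_aestronglyMeasurable hf.1) <| .of_forall fun x => by
    simpa only [Real.norm_eq_abs, abs_clip hM] using min_le_right M |f x|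

lemma MeasureTheory.Integrable.max_abs_sub (hf : Integrable f μ) (hM : 0 ≤ M) :
    Integrable (fun x => max (|f x| - M) 0) μ :=
  hf.abs.mono ((hf.1.norm.sub aestronglyMeasurable_const).sup aestronglyMeasurable_const) <|
    .of_forall fun x => by
      simp only [Real.norm_eq_abs, abs_abs]
      rw [abs_of_nonneg (le_max_right _ _)]
      exact max_le (by linarith) (abs_nonneg _)

lemma two_mul_integral_le_integral_sq_sub_integral_sq_clip [IsFiniteMeasure μ]
    (hf : MemLp f 2 μ) (hM : 0 ≤ M) :
    2 * M * ∫ x, max (|f x| - M) 0 ∂μ ≤ ∫ x, f x ^ 2 ∂μ - ∫ x, clip M (f x) ^ 2 ∂μ := by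
  rw [← integral_const_mul, ← integral_sub hf.integrable_sq (hf.clip hM).integrable_sq]
  exact integral_mono (((hf.integrable one_le_two).max_abs_sub hM).const_mul _)
    (hf.integrable_sq.sub (hf.clip hM).integrable_sq)
    fun x => two_mul_max_abs_sub_le_sq_sub_sq_clip hM (f x)

lemma ae_abs_le_of_integral_max_abs_sub_nonpos (hf : Integrable f μ) (hM : 0 ≤ M)
    (h : ∫ x, max (|f x| - M) 0 ∂μ ≤ 0) : ∀ᵐ x ∂μ, |f x| ≤ M := by
  have hzero : (fun x => max (|f x| - M) 0) =ᵐ[μ] 0 :=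
    (integral_eq_zero_iff_of_nonneg (fun x => le_max_right _ _) (hf.max_abs_sub hM)).mp
      (h.antisymm (integral_nonneg fun x => le_max_right _ _))
  filter_upwards [hzero] with x hx
  simpa [sub_nonpos] using hx

end ClipIntegral

lemma energyL2_clip_sub_energyL2_le (σe σt σf γf γW : ℝ) (hσf : 0 < σf) (hγf : 0 ≤ γf)
    (hγW : 0 ≤ γW) {X Y : Set E3} (hX : MeasurableSet X) (hY : MeasurableSet Y)
    (hXfin : μH[2] X < ⊤) (hYfin : μH[2] Y < ⊤) {nX nY : E3 → E3} (hnXm : Measurable nX)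
    (hnYm : Measurable nY) (hnX : ∀ x ∈ X, ‖nX x‖ ≤ 1) (hnY : ∀ y ∈ Y, ‖nY y‖ ≤ 1)
    {g : E3 → ℝ} (hg : Measurable g) {f : E3 → ℝ} (hf : Measurable f)
    (hf2 : MemLp f 2 (μH[2].restrict X)) {M : ℝ} (hM : 0 ≤ M) :
    energyL2 σe σt σf γf γW X Y nX nY g (fun x => clip M (f x))
        - energyL2 σe σt σf γf γW X Y nX nY g f ≤
      (2 * γW * ((μH[2] X).toReal + (μH[2] Y).toReal) / σf - γf * M) *
        ∫ x in X, max (|f x| - M) 0 ∂μH[2] := by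
  have : IsFiniteMeasure (μH[2].restrict X) := isFiniteMeasure_restrict.mpr hXfin.ne
  have : IsFiniteMeasure (μH[2].restrict Y) := isFiniteMeasure_restrict.mpr hYfin.ne
  have hnX' := ae_restrict_of_forall_mem (μ := μH[2]) hX hnX
  have hnY' := ae_restrict_of_forall_mem (μ := μH[2]) hY hnY
  have hfc : Measurable fun x => clip M (f x) := (continuous_clip M).measurable.comp hf
  have hexcess : Integrable (fun x => max (|f x| - M) 0) (μH[2].restrict X) :=
    (hf2.integrable one_le_two).max_abs_sub hM
  have hexcess' : Integrable (fun x => |clip M (f x) - f x|) (μH[2].restrict X) := by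
    simpa only [abs_sub_comm (clip M _), abs_sub_clip hM] using hexcess
  have hL2 := two_mul_integral_le_integral_sq_sub_integral_sq_clip hf2 hM
  have hXX := integral_integral_kern_sub_le σe σt σf hσf hnXm hnXm hnX' hnX' hfc hfc hf hf
    hexcess' hexcess'
  have hXY := integral_integral_kern_sub_le σe σt σf hσf hnXm hnYm hnX' hnY' hf hg hfc hg
    (by simpa only [abs_sub_clip hM] using hexcess) (by simp)
  simp only [abs_sub_comm (clip M _), abs_sub_clip hM, sub_self, abs_zero, integral_zero,
    measureReal_def, Measure.restrict_apply_univ] at hXX hXY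
  unfold energyL2
  dsimp only
  linear_combination (γf / 2) * hL2 + (γW / 2) * hXX + γW * hXY

theorem L2_energy_minimizer_essSup_bound_general
    (σe σt σf : ℝ) (hσf : 0 < σf) :
    ∃ C : ℝ, 0 < C ∧
      ∀ (X Y : Set E3), Bornology.IsBounded X → Bornology.IsBounded Y →
        MeasurableSet X → MeasurableSet Y → μH[2] X < ⊤ → μH[2] Y < ⊤ →
        ∀ (nX nY : E3 → E3), Measurable nX → Measurable nY →
          (∀ x ∈ X, ‖nX x‖ = 1) → (∀ y ∈ Y, ‖nY y‖ = 1) →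
        ∀ (g : E3 → ℝ), Measurable g → MemLp g 2 (μH[2].restrict Y) →
        ∀ (γf γW : ℝ), 0 < γf → 0 < γW →
        ∀ fstar : E3 → ℝ, Measurable fstar → MemLp fstar 2 (μH[2].restrict X) →
          (∀ f : E3 → ℝ, Measurable f → MemLp f 2 (μH[2].restrict X) →
            energyL2 σe σt σf γf γW X Y nX nY g fstar ≤
              energyL2 σe σt σf γf γW X Y nX nY g f) →
          ∀ᵐ x ∂(μH[2].restrict X),
            |fstar x| ≤ C * (γW / γf) * ((μH[2] X).toReal + (μH[2] Y).toReal) := by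
  refine ⟨4 / σf, by positivity, ?_⟩
  intro X Y _ _ hX hY hXfin hYfin nX nY hnXm hnYm hnX hnY g hg _ γf γW hγf hγW fstar hf hf2 hmin
  set a := (μH[2] X).toReal
  set b := (μH[2] Y).toReal
  set M := 4 / σf * (γW / γf) * (a + b)
  have ha : 0 ≤ a := ENNReal.toReal_nonneg
  have hb : 0 ≤ b := ENNReal.toReal_nonneg
  have hM : 0 ≤ M := by positivity
  rcases (add_nonneg ha hb).eq_or_lt with hab | hab
  · have hXnull : μH[2] X = 0 :=
      ((ENNReal.toReal_eq_zero_iff _).mp (by linarith)).resolve_right hXfin.ne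
    simp [Measure.restrict_eq_zero.mpr hXnull]
  have : IsFiniteMeasure (μH[2].restrict X) := isFiniteMeasure_restrict.mpr hXfin.ne
  have hdecrease := energyL2_clip_sub_energyL2_le σe σt σf γf γW hσf hγf.le hγW.le hX hY hXfin
    hYfin hnXm hnYm (fun x hx => (hnX x hx).le) (fun y hy => (hnY y hy).le) hg hf hf2 hM
  have hoptimal :=
    hmin (fun x => clip M (fstar x)) ((continuous_clip M).measurable.comp hf) (hf2.clip hM)
  have hcoef : 2 * γW * (a + b) / σf - γf * M = -(2 * γW * (a + b) / σf) := by
    simp only [M]; field_simp; ring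
  have hpos : 0 < 2 * γW * (a + b) / σf := by positivity
  refine ae_abs_le_of_integral_max_abs_sub_nonpos (hf2.integrable one_le_two) hM ?_
  rw [hcoef] at hdecrease
  nlinarith

/-- Uniform `L∞` bound on minimizers of the `L²` matching energy: there is a constant
`C > 0` depending only on the kernel parameters (in particular independent of `X` and
`Y`) such that every minimizer `f*` of `E` over the square-integrable signals is
essentially bounded with `‖f*‖_{L∞(X)} ≤ C (γW/γf)(H²(X) + H²(Y))`. -/
theorem L2_energy_minimizer_essSup_bound
    (σe σt σf : ℝ) (hσe : 0 < σe) (hσt : 0 < σt) (hσf : 0 < σf) :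
    ∃ C : ℝ, 0 < C ∧
      ∀ (X Y : Set E3), Bornology.IsBounded X → Bornology.IsBounded Y →
        MeasurableSet X → MeasurableSet Y → μH[2] X < ⊤ → μH[2] Y < ⊤ →
        ∀ (nX nY : E3 → E3), Measurable nX → Measurable nY →
          (∀ x ∈ X, ‖nX x‖ = 1) → (∀ y ∈ Y, ‖nY y‖ = 1) →
        ∀ (g : E3 → ℝ), Measurable g → MemLp g 2 (μH[2].restrict Y) →
        ∀ (γf γW : ℝ), 0 < γf → 0 < γW →
        ∀ fstar : E3 → ℝ, Measurable fstar → MemLp fstar 2 (μH[2].restrict X) →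
          (∀ f : E3 → ℝ, Measurable f → MemLp f 2 (μH[2].restrict X) →
            energyL2 σe σt σf γf γW X Y nX nY g fstar ≤
              energyL2 σe σt σf γf γW X Y nX nY g f) →
          ∀ᵐ x ∂(μH[2].restrict X),
            |fstar x| ≤ C * (γW / γf) * ((μH[2] X).toReal + (μH[2] Y).toReal) :=
  L2_energy_minimizer_essSup_bound_general σe σt σf hσf
end
end
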